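/- Let H be a finite non-abelian group with generating set X, let G be a group generated by a finite set Y with |Y| = d, and let M = max{ l_X(h) : h ∈ H } be the maximal word length of an element of H with respect to X. Then there exists c ∈ H (possibly c = 1) such that every element of the restricted regular wreath product G ≀ H is a product of at most M·(d·|H| + 1) + 1 palindromes with respect to the generating set consisting of the canonical copies of X ∪ {c} and of Y; that is, pw(G ≀ H, X ∪ {c} ∪ Y) ≤ M·(d·|H| + 1) + 1. -/

import Mathlib

open Function

section WreathDefs

variable (G A : Type*) [Group G] [Group A]

/-- The subgroup of finitely supported functions `A → G` (pointwise operations). -/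
def restrictedBase : Subgroup (A → G) where
  carrier := {f | (Function.mulSupport f).Finite}
  one_mem' := by simp [Function.mulSupport_one]
  mul_mem' := fun hf hg => (hf.union hg).subset (Function.mulSupport_mul _ _)
  inv_mem' := fun hf => by simpa [Function.mulSupport_inv] using hf

variable {G A}

lemma shift_mem (a : A) (f : restrictedBase G A) :
    (fun x => (f : A → G) (a * x)) ∈ restrictedBase G A := by
  have h : Function.mulSupport (fun x => (f : A → G) (a * x)) =
      (fun x : A => a * x) ⁻¹' Function.mulSupport (f : A → G) :=
    Function.mulSupport_comp_eq_preimage _ _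
  show (Function.mulSupport _).Finite
  rw [h]
  exact f.2.preimage (mul_right_injective a).injOn

/-- The translation automorphism of the restricted base, `(a • f) x = f (a⁻¹ * x)`. -/
noncomputable def shiftEquiv (a : A) : restrictedBase G A ≃* restrictedBase G A where
  toFun f := ⟨fun x => (f : A → G) (a⁻¹ * x), shift_mem a⁻¹ f⟩
  invFun f := ⟨fun x => (f : A → G) (a * x), shift_mem a f⟩
  left_inv f := by ext x; simp
  right_inv f := by ext x; simp
  map_mul' f g := by ext x; simp

variable (G A)

/-- The translation action of `A` on finitely supported functions `A → G`. -/
noncomputable def wreathAction : A →* MulAut (restrictedBase G A) where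
  toFun a := shiftEquiv a
  map_one' := by ext f x; simp [shiftEquiv]
  map_mul' a b := by ext f x; simp [shiftEquiv, mul_assoc]

/-- The restricted regular wreath product `G ≀ A`. -/
noncomputable abbrev Wreath := restrictedBase G A ⋊[wreathAction G A] A

variable {G A}

/-- The finitely supported function equal to `g` at `1` and trivial elsewhere. -/
noncomputable def atOne (g : G) : restrictedBase G A :=
  letI := Classical.decEq A
  ⟨fun x => if x = 1 then g else 1, by
    apply Set.Finite.subset (Set.finite_singleton (1 : A))
    intro x hx
    simp only [Function.mem_mulSupport] at hx
    by_contra hx1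
    exact hx (if_neg (by simpa using hx1))⟩

/-- The natural generating set of `G ≀ A` built from generating sets of the factors. -/
noncomputable def wreathGens (XB : Set G) (XA : Set A) : Set (Wreath G A) :=
  ((fun g => SemidirectProduct.inl (atOne g)) '' XB) ∪ (SemidirectProduct.inr '' XA)

end WreathDefs

section Palindromes

variable {W : Type*} [Group W]

/-- `g` is a palindrome with respect to `S`: it is the product of a word over `S`
(entries in `S ∪ S⁻¹`) which reads the same forwards and backwards. -/
def IsPalindrome (S : Set W) (g : W) : Prop :=
  ∃ l : List W, (∀ x ∈ l, x ∈ S ∪ S⁻¹) ∧ l.reverse = l ∧ l.prod = g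

/-- `g` is a product of at most `n` palindromes with respect to `S`. -/
def ProdOfPal (S : Set W) (n : ℕ) (g : W) : Prop :=
  ∃ l : List W, l.length ≤ n ∧ (∀ p ∈ l, IsPalindrome S p) ∧ l.prod = g

/-- The palindromic width of a group with respect to `S` (`⊤` if infinite). -/
noncomputable def palWidth (S : Set W) : ℕ∞ :=
  sInf {n : ℕ∞ | ∃ m : ℕ, n = (m : ℕ∞) ∧ ∀ g : W, ProdOfPal S m g}

/-- The word length of `g` with respect to `S`. -/
noncomputable def wordLength (S : Set W) (g : W) : ℕ :=
  sInf {n : ℕ | ∃ l : List W, l.length = n ∧ (∀ x ∈ l, x ∈ S ∪ S⁻¹) ∧ l.prod = g}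

end Palindromes
/-!
Write `w = (f, a)`. Modulo `[G, G]` each value `f h` is a product of `d` powers `y ^ k` of
generators, and the base element carrying `y ^ k` at `h` is the conjugate by `h` of the letter
power `(y at 1) ^ k`. A word for `σ`, that letter power and the reversed word form a palindrome
`σ (y at 1) ^ k σ'`, and the error `σ'` of each such palindrome is absorbed into the conjugator
of the next: `d |H|` palindromes give the abelian part up to a factor from `H`.

The rest of the base part has values in `[G, G]`. Since `H` is non-abelian, for some `c` a word
over `X ∪ {c}` has product `k ≠ 1` and reverse product `1`. Using it, two words reversing to
letters at a position `p` can be chosen with products at the distinct, hence commuting,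
positions `t` and `t k`; their commutator is a word with product `1` reversing to a commutator
at `p`. So such a base element is the reverse product of a word with product `1`, and that word
followed by its reverse is one palindrome. The remaining element of `H` takes at most `M`
letters, and `d |H| + 1 + M ≤ M (d |H| + 1) + 1` as `M ≥ 1`.
-/

section Words

open scoped commutatorElement

variable {W W' : Type*} [Group W] [Group W'] {S : Set W}

lemma map_mem_union_inv (f : W →* W') {T : Set W'} (hf : f '' S ⊆ T) {x : W}
    (hx : x ∈ S ∪ S⁻¹) : f x ∈ T ∪ T⁻¹ := by
  rcases hx with hx | hx
  · exact Or.inl (hf ⟨x, hx, rfl⟩)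
  · exact Or.inr (by simpa [Set.mem_inv] using hf ⟨x⁻¹, hx, rfl⟩)

lemma exists_word_of_closure_eq_top (hS : Subgroup.closure S = ⊤) (g : W) :
    ∃ l : List W, (∀ x ∈ l, x ∈ S ∪ S⁻¹) ∧ l.prod = g := by
  apply Submonoid.exists_list_of_mem_closure
  rw [← Subgroup.closure_toSubmonoid, hS]
  trivial

lemma exists_word_length_eq_wordLength (hS : Subgroup.closure S = ⊤) (g : W) :
    ∃ l : List W, l.length = wordLength S g ∧ (∀ x ∈ l, x ∈ S ∪ S⁻¹) ∧ l.prod = g := by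
  obtain ⟨l, hl, hg⟩ := exists_word_of_closure_eq_top hS g
  exact Nat.sInf_mem (s := {n | ∃ l : List W, l.length = n ∧ (∀ x ∈ l, x ∈ S ∪ S⁻¹) ∧
    l.prod = g}) ⟨l.length, l, rfl, hl, hg⟩

lemma wordLength_pos (hS : Subgroup.closure S = ⊤) {g : W} (hg : g ≠ 1) :
    0 < wordLength S g := by
  obtain ⟨l, hlen, -, rfl⟩ := exists_word_length_eq_wordLength hS g
  rw [← hlen, List.length_pos_iff]
  rintro rfl
  exact hg List.prod_nil

lemma inv_mem_union_inv {x : W} (hx : x ∈ S ∪ S⁻¹) : x⁻¹ ∈ S ∪ S⁻¹ := by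
  rcases hx with hx | hx
  · exact Or.inr (by simpa [Set.mem_inv] using hx)
  · exact Or.inl hx

namespace IsPalindrome

lemma of_mem {x : W} (hx : x ∈ S ∪ S⁻¹) : IsPalindrome S x :=
  ⟨[x], by simpa, rfl, by simp⟩

lemma zpow_of_mem {x : W} (hx : x ∈ S ∪ S⁻¹) (k : ℤ) : IsPalindrome S (x ^ k) := by
  have pow_of_mem {x : W} (hx : x ∈ S ∪ S⁻¹) (n : ℕ) : IsPalindrome S (x ^ n) :=
    ⟨List.replicate n x, fun y hy => List.eq_of_mem_replicate hy ▸ hx, List.reverse_replicate,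
      List.prod_replicate n x⟩
  obtain ⟨n, rfl | rfl⟩ := Int.eq_nat_or_neg k
  · simpa using pow_of_mem hx n
  · simpa using pow_of_mem (inv_mem_union_inv hx) n

lemma map {T : Set W'} (f : W →* W') (hf : f '' S ⊆ T) {g : W} (hg : IsPalindrome S g) :
    IsPalindrome T (f g) := by
  obtain ⟨l, hl, hrev, rfl⟩ := hg
  refine ⟨l.map f, ?_, by rw [← List.map_reverse, hrev], (map_list_prod f l).symm⟩
  simpa using fun x hx => map_mem_union_inv f hf (hl x hx)

lemma prodOfPal {g : W} (hg : IsPalindrome S g) : ProdOfPal S 1 g :=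
  ⟨[g], le_rfl, by simpa, by simp⟩

end IsPalindrome

namespace ProdOfPal

lemma mono {m n : ℕ} (hmn : m ≤ n) {g : W} (hg : ProdOfPal S m g) : ProdOfPal S n g := by
  obtain ⟨l, hlen, hl, rfl⟩ := hg
  exact ⟨l, hlen.trans hmn, hl, rfl⟩

lemma mul {m n : ℕ} {a b : W} (ha : ProdOfPal S m a) (hb : ProdOfPal S n b) :
    ProdOfPal S (m + n) (a * b) := by
  obtain ⟨l₁, hlen₁, hl₁, rfl⟩ := ha
  obtain ⟨l₂, hlen₂, hl₂, rfl⟩ := hb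
  refine ⟨l₁ ++ l₂, by simp; omega, ?_, List.prod_append⟩
  simpa using fun p hp => hp.elim (hl₁ p) (hl₂ p)

lemma of_word {n : ℕ} {l : List W} (hl : ∀ x ∈ l, x ∈ S ∪ S⁻¹) (hlen : l.length ≤ n) :
    ProdOfPal S n l.prod :=
  ⟨l, hlen, fun x hx => IsPalindrome.of_mem (hl x hx), rfl⟩

lemma of_wordLength (hS : Subgroup.closure S = ⊤) (g : W) : ProdOfPal S (wordLength S g) g := by
  obtain ⟨l, hlen, hl, rfl⟩ := exists_word_length_eq_wordLength hS g
  exact of_word hl hlen.le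

lemma map {T : Set W'} (f : W →* W') (hf : f '' S ⊆ T) {n : ℕ} {g : W}
    (hg : ProdOfPal S n g) : ProdOfPal T n (f g) := by
  obtain ⟨l, hlen, hl, rfl⟩ := hg
  refine ⟨l.map f, by simpa using hlen, ?_, (map_list_prod f l).symm⟩
  simpa using fun p hp => (hl p hp).map f hf

end ProdOfPal

def IsRevPair (S : Set W) (a b : W) : Prop :=
  ∃ l : List W, (∀ x ∈ l, x ∈ S ∪ S⁻¹) ∧ l.prod = a ∧ l.reverse.prod = b

namespace IsRevPair

lemma one : IsRevPair S 1 1 := ⟨[], by simp, rfl, rfl⟩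

lemma of_mem {x : W} (hx : x ∈ S ∪ S⁻¹) : IsRevPair S x x := ⟨[x], by simpa, by simp, by simp⟩

lemma symm {a b : W} (h : IsRevPair S a b) : IsRevPair S b a := by
  obtain ⟨l, hl, rfl, rfl⟩ := h
  exact ⟨l.reverse, by simpa using hl, rfl, by simp⟩

lemma mul {a a' b b' : W} (ha : IsRevPair S a a') (hb : IsRevPair S b b') :
    IsRevPair S (a * b) (b' * a') := by
  obtain ⟨l₁, hl₁, rfl, rfl⟩ := ha
  obtain ⟨l₂, hl₂, rfl, rfl⟩ := hb
  refine ⟨l₁ ++ l₂, ?_, List.prod_append, by simp⟩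
  simpa using fun x hx => hx.elim (hl₁ x) (hl₂ x)

lemma inv {a b : W} (h : IsRevPair S a b) : IsRevPair S a⁻¹ b⁻¹ := by
  obtain ⟨l, hl, rfl, rfl⟩ := h
  refine ⟨(l.map (·⁻¹)).reverse, ?_, by simp [List.prod_inv_reverse],
    by simp [List.prod_inv_reverse]⟩
  simp only [List.mem_reverse, List.mem_map]
  rintro _ ⟨x, hx, rfl⟩
  exact inv_mem_union_inv (hl x hx)

lemma mono {T : Set W} {a b : W} (hST : S ⊆ T) (h : IsRevPair S a b) : IsRevPair T a b := by
  obtain ⟨l, hl, rfl, rfl⟩ := h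
  exact ⟨l, fun x hx => Set.union_subset_union hST (Set.inv_subset_inv.2 hST) (hl x hx),
    rfl, rfl⟩

lemma map {T : Set W'} (f : W →* W') (hf : f '' S ⊆ T) {a b : W} (h : IsRevPair S a b) :
    IsRevPair T (f a) (f b) := by
  obtain ⟨l, hl, rfl, rfl⟩ := h
  refine ⟨l.map f, ?_, (map_list_prod f l).symm, by rw [← List.map_reverse, map_list_prod]⟩
  simpa using fun x hx => map_mem_union_inv f hf (hl x hx)

lemma exists_of_closure_eq_top (hS : Subgroup.closure S = ⊤) (a : W) :
    ∃ b, IsRevPair S a b := by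
  obtain ⟨l, hl, rfl⟩ := exists_word_of_closure_eq_top hS a
  exact ⟨_, l, hl, rfl, rfl⟩

lemma isPalindrome_mul_mul {a b m : W} (h : IsRevPair S a b) (hm : IsPalindrome S m) :
    IsPalindrome S (a * m * b) := by
  obtain ⟨l, hl, rfl, rfl⟩ := h
  obtain ⟨w, hw, hrev, rfl⟩ := hm
  refine ⟨l ++ w ++ l.reverse, ?_, by simp [hrev], by simp [mul_assoc]⟩
  simp only [List.mem_append, List.mem_reverse]
  exact fun x hx => hx.elim (·.elim (hl x) (hw x)) (hl x)

lemma isPalindrome_mul {a b : W} (h : IsRevPair S a b) : IsPalindrome S (a * b) := by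
  simpa using h.isPalindrome_mul_mul (⟨[], by simp, rfl, rfl⟩ : IsPalindrome S 1)

lemma commutatorElement {a a' b b' : W} (ha : IsRevPair S a a') (hb : IsRevPair S b b')
    (hab : Commute a b) : IsRevPair S 1 ⁅b'⁻¹, a'⁻¹⁆ := by
  have h := ((ha.mul hb).mul ha.inv).mul hb.inv
  rw [hab.eq, mul_inv_cancel_right, mul_inv_cancel, ← mul_assoc, ← mul_assoc] at h
  rwa [commutatorElement_def, inv_inv, inv_inv]

lemma right_unique (hS : ∀ k, IsRevPair S k 1 → k = 1) {a b b' : W} (hb : IsRevPair S a b)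
    (hb' : IsRevPair S a b') : b = b' := by
  have h := (hb.mul hb'.inv).symm
  rw [mul_inv_cancel] at h
  exact (inv_mul_eq_one.1 (hS _ h)).symm

/-- If every word over `X ∪ {c}` whose reverse has product `1` has product `1` itself, reading
words backwards is a well-defined map `θ` on `H`; it fixes every letter, in particular `c`, and
it is an anti-homomorphism. Letting `c` range over `H` forces `θ = id`, so `H` is abelian. -/
lemma exists_union_singleton_ne_one {H : Type*} [Group H] {X : Set H}
    (hX : Subgroup.closure X = ⊤) (hna : ∃ a b : H, a * b ≠ b * a) :
    ∃ c k : H, k ≠ 1 ∧ IsRevPair (X ∪ {c}) k 1 := by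
  by_contra! h
  have unique (c : H) {a b b' : H} := right_unique (S := X ∪ {c}) (a := a) (b := b) (b' := b')
    fun k hk => by_contra fun hk1 => h c k hk1 hk
  choose θ hθ using exists_of_closure_eq_top hX
  have hθc (c a : H) : IsRevPair (X ∪ {c}) a (θ a) := (hθ a).mono Set.subset_union_left
  by_cases hid : ∀ x, θ x = x
  · obtain ⟨a, b, hab⟩ := hna
    have hanti := unique 1 ((hθc 1 a).mul (hθc 1 b)) (hθc 1 (a * b))
    rw [hid, hid, hid] at hanti
    exact hab hanti.symm
  · obtain ⟨c, hc⟩ := not_forall.1 hid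
    exact hc (unique c (hθc c c) (of_mem (Or.inl (Or.inr rfl))))

end IsRevPair

def revKernel (S : Set W) : Subgroup W where
  carrier := {w | IsRevPair S 1 w}
  one_mem' := IsRevPair.one
  mul_mem' ha hb := by simpa using hb.mul ha
  inv_mem' ha := by simpa using ha.inv

lemma mem_revKernel {w : W} : w ∈ revKernel S ↔ IsRevPair S 1 w := Iff.rfl

lemma isPalindrome_of_mem_revKernel {w : W} (hw : w ∈ revKernel S) :
    IsPalindrome S w := by
  simpa using IsRevPair.isPalindrome_mul hw

variable {H : Type*} [Group H]

/-- The invariant for chaining palindromes of the shape `ι σ * x * ι γ`: the right factor `ι γ`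
of one is absorbed into the left factor of the next. -/
def ProdOfPalBetween (S : Set W) (ι : H →* W) (n : ℕ) (x : W) : Prop :=
  ∀ σ : H, ∃ γ : H, ProdOfPal S n (ι σ * x * ι γ)

namespace ProdOfPalBetween

variable {ι : H →* W}

lemma one : ProdOfPalBetween S ι 0 1 :=
  fun σ => ⟨σ⁻¹, ⟨[], le_rfl, by simp, by simp⟩⟩

lemma mul {m n : ℕ} {x y : W} (hx : ProdOfPalBetween S ι m x)
    (hy : ProdOfPalBetween S ι n y) : ProdOfPalBetween S ι (m + n) (x * y) := by
  intro σ
  obtain ⟨γ, hγ⟩ := hx σ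
  obtain ⟨δ, hδ⟩ := hy γ⁻¹
  refine ⟨δ, ?_⟩
  simpa [mul_assoc] using hγ.mul hδ

lemma list_prod {n : ℕ} {l : List W} (hl : ∀ x ∈ l, ProdOfPalBetween S ι n x) :
    ProdOfPalBetween S ι (l.length * n) l.prod := by
  induction l with
  | nil => simpa using one
  | cons x l ih =>
    simpa [add_mul, add_comm] using
      (hl x List.mem_cons_self).mul (ih fun y hy => hl y (List.mem_cons_of_mem x hy))

lemma conj {n : ℕ} {x : W} (hx : ProdOfPalBetween S ι n x) (a : H) :
    ProdOfPalBetween S ι n (ι a * x * (ι a)⁻¹) := by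
  intro σ
  obtain ⟨γ, hγ⟩ := hx (σ * a)
  refine ⟨a * γ, ?_⟩
  simpa [mul_assoc] using hγ

end ProdOfPalBetween

end Words

section Abelianization

variable {G : Type*} [Group G]

lemma exists_list_zpow_mul_mem_commutator {Y : Finset G}
    (hY : Subgroup.closure (Y : Set G) = ⊤) (g : G) :
    ∃ l : List G, l.length = Y.card ∧ (∀ x ∈ l, ∃ y ∈ Y, ∃ k : ℤ, x = y ^ k) ∧
      ∃ z ∈ commutator G, g = l.prod * z := by
  have hclosure : Subgroup.closure (Set.range fun y : Y => Abelianization.of (y : G)) = ⊤ := by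
    rw [Set.range_comp' Abelianization.of, Subtype.range_coe, ← MonoidHom.map_closure, hY,
      ← MonoidHom.range_eq_map, MonoidHom.range_eq_top]
    exact QuotientGroup.mk_surjective
  obtain ⟨a, ha⟩ := Subgroup.exists_of_mem_closure_range _ (Abelianization.of g)
    (hclosure ▸ Subgroup.mem_top _)
  refine ⟨Finset.univ.toList.map fun y : Y => (y : G) ^ a y, by simp, ?_, ?_⟩
  · simp only [List.mem_map, Finset.mem_toList, Finset.mem_univ, true_and]
    rintro _ ⟨y, rfl⟩
    exact ⟨y, y.2, _, rfl⟩
  refine ⟨_, ?_, (mul_inv_cancel_left _ g).symm⟩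
  rw [← Abelianization.ker_of, MonoidHom.mem_ker, map_mul, map_inv, map_list_prod, List.map_map]
  simp [Function.comp_def, Finset.prod_map_toList, ha]

end Abelianization

namespace Wreath

open SemidirectProduct

variable {G H : Type*} [Group G] [Group H]

noncomputable def base [Finite H] : (H → G) →* Wreath G H :=
  inl.comp
    { toFun := fun f => ⟨f, Set.toFinite _⟩
      map_one' := rfl
      map_mul' := fun _ _ => rfl }

noncomputable def single [Finite H] [DecidableEq H] (p : H) : G →* Wreath G H :=
  base.comp (MonoidHom.mulSingle (fun _ : H => G) p)

section Base

variable [Finite H]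

lemma base_apply (f : H → G) : base f = inl ⟨f, Set.toFinite _⟩ := rfl

lemma base_left_mul_inr_right (w : Wreath G H) : base (w.left : H → G) * inr w.right = w :=
  inl_left_mul_inr_right w

lemma inr_mul_base_mul_inr_inv (a : H) (f : H → G) :
    inr a * base f * inr a⁻¹ = base fun x => f (a⁻¹ * x) :=
  (inl_aut (φ := wreathAction G H) a _).symm

lemma eq_base_mul_inr_mul_base_mul_inr (w : Wreath G H) {f₁ f₂ : H → G}
    (hf : ∀ h, (w.left : H → G) h = f₁ h * f₂ h) (γ : H) :
    w = base f₁ * inr γ * base (fun x => f₂ (γ * x)) * inr (γ⁻¹ * w.right) := by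
  have hconj : base (fun x => f₂ (γ * x)) = inr γ⁻¹ * base f₂ * inr γ := by
    simpa using (inr_mul_base_mul_inr_inv γ⁻¹ f₂).symm
  have hleft : base (w.left : H → G) = base f₁ * base f₂ := by
    rw [← map_mul]
    exact congrArg base (funext hf)
  rw [hconj, map_mul, map_inv]
  conv_lhs => rw [← base_left_mul_inr_right w, hleft]
  group

variable [DecidableEq H]

lemma single_apply (p : H) (g : G) : single p g = base (Pi.mulSingle p g) := rfl

lemma inr_mul_single_mul_inr_inv (a p : H) (g : G) :
    inr a * single p g * inr a⁻¹ = single (a * p) g := by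
  rw [single_apply, single_apply, inr_mul_base_mul_inr_inv]
  congr 1
  funext x
  simp [Pi.mulSingle_apply, inv_mul_eq_iff_eq_mul]

lemma commute_single {p q : H} (hpq : p ≠ q) (g g' : G) :
    Commute (single p g) (single q g') := by
  rw [single_apply, single_apply]
  exact (Pi.mulSingle_commute hpq g g').map base

lemma single_one (g : G) : single (1 : H) g = inl (atOne g) := by
  rw [single_apply, base_apply]
  congr 2
  funext x
  simp [Pi.mulSingle_apply]

end Base

lemma list_prod_single [Fintype H] [DecidableEq H] (f : H → G) :
    (Finset.univ.toList.map fun h => single h (f h)).prod = base f := by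
  have hf : (Finset.univ.toList.map fun h => Pi.mulSingle h (f h)).prod = f := by
    rw [← Finset.noncommProd_toFinset _ _ (fun i _ j _ _ => Pi.mulSingle_apply_commute f i j)
      (Finset.nodup_toList _), Finset.toList_toFinset, Finset.noncommProd_mulSingle]
  conv_rhs => rw [← hf, map_list_prod, List.map_map]
  rfl

lemma inr_image_subset_wreathGens (XB : Set G) (XA : Set H) :
    (inr : H →* Wreath G H) '' XA ⊆ wreathGens XB XA :=
  Set.subset_union_right

lemma single_one_image_subset_wreathGens [Finite H] [DecidableEq H] (XB : Set G) (XA : Set H) :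
    single (1 : H) '' XB ⊆ wreathGens XB XA := by
  rintro _ ⟨g, hg, rfl⟩
  exact Or.inl ⟨g, hg, (single_one g).symm⟩

section Commutator

open scoped commutatorElement

variable [Finite H] [DecidableEq H] {XB : Set G} {XA : Set H}

lemma isRevPair_single {t p : H} {u z : G}
    (ht : IsRevPair (wreathGens XB XA) (inr t) (inr p⁻¹))
    (hu : IsRevPair (wreathGens XB XA) (single 1 u) (single 1 z)) :
    IsRevPair (wreathGens XB XA) (single t u) (single p z) := by
  have h := (ht.mul hu).mul ht.inv
  rwa [← map_inv, ← map_inv, inv_inv, inr_mul_single_mul_inr_inv, ← mul_assoc,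
    inr_mul_single_mul_inr_inv, mul_one, mul_one] at h

/-- Sending the same letter `z` to position `p` along two words for `t` and `t * k` that both
reverse to `p⁻¹` leaves behind letters at the distinct positions `t` and `t * k`, which commute;
so the commutator of the two resulting pairs reverses `1` into a commutator at `p`. -/
lemma single_commutatorElement_mem_revKernel (hXB : Subgroup.closure XB = ⊤)
    (hXA : Subgroup.closure XA = ⊤) {k : H} (hk : k ≠ 1) (hkA : IsRevPair XA k 1)
    (p : H) (z₁ z₂ : G) : single p ⁅z₁, z₂⁆ ∈ revKernel (wreathGens XB XA) := by
  have hinr := inr_image_subset_wreathGens XB XA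
  obtain ⟨t, ht⟩ := IsRevPair.exists_of_closure_eq_top hXA p⁻¹
  have hT : IsRevPair (wreathGens XB XA) (inr t) (inr p⁻¹) := ht.symm.map inr hinr
  have hTk : IsRevPair (wreathGens XB XA) (inr (t * k)) (inr p⁻¹) := by
    simpa using (ht.symm.mul hkA).map inr hinr
  have hU (z : G) : ∃ u, IsRevPair (wreathGens XB XA) (single 1 u) (single 1 z) := by
    obtain ⟨u, hu⟩ := IsRevPair.exists_of_closure_eq_top hXB z
    exact ⟨u, hu.symm.map _ (single_one_image_subset_wreathGens XB XA)⟩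
  obtain ⟨u₁, hu₁⟩ := hU z₁⁻¹
  obtain ⟨u₂, hu₂⟩ := hU z₂⁻¹
  have htk : t ≠ t * k := by simpa using hk
  have h := (isRevPair_single hT hu₂).commutatorElement (isRevPair_single hTk hu₁)
    (commute_single htk u₂ u₁)
  rw [mem_revKernel]
  simpa [← map_inv, ← map_commutatorElement] using h

lemma base_mem_revKernel [Fintype H] (hXB : Subgroup.closure XB = ⊤)
    (hXA : Subgroup.closure XA = ⊤) {k : H} (hk : k ≠ 1) (hkA : IsRevPair XA k 1)
    {f : H → G} (hf : ∀ h, f h ∈ commutator G) : base f ∈ revKernel (wreathGens XB XA) := by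
  have hsingle (p : H) : commutator G ≤ (revKernel (wreathGens XB XA)).comap (single p) := by
    rw [commutator_def, Subgroup.commutator_le]
    exact fun z₁ _ z₂ _ => single_commutatorElement_mem_revKernel hXB hXA hk hkA p z₁ z₂
  rw [← list_prod_single]
  refine Subgroup.list_prod_mem _ fun w hw => ?_
  obtain ⟨h, -, rfl⟩ := List.mem_map.1 hw
  exact hsingle h (hf h)

end Commutator

section Abelian

variable [DecidableEq H] {XB : Set G} {XA : Set H}

lemma prodOfPalBetween_single_zpow [Finite H] (hXA : Subgroup.closure XA = ⊤) {y : G}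
    (hy : y ∈ XB) (h : H) (k : ℤ) :
    ProdOfPalBetween (wreathGens XB XA) inr 1 (single h (y ^ k)) := by
  have hone : ProdOfPalBetween (wreathGens XB XA) inr 1 (single 1 (y ^ k)) := by
    intro σ
    obtain ⟨γ, hγ⟩ := IsRevPair.exists_of_closure_eq_top hXA σ
    refine ⟨γ, IsPalindrome.prodOfPal ?_⟩
    rw [map_zpow]
    exact (hγ.map inr (inr_image_subset_wreathGens XB XA)).isPalindrome_mul_mul
      (IsPalindrome.zpow_of_mem
        (Or.inl (single_one_image_subset_wreathGens XB XA ⟨y, hy, rfl⟩)) k)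
  have h := hone.conj h
  rwa [← map_inv, inr_mul_single_mul_inr_inv, mul_one] at h

lemma prodOfPalBetween_base [Fintype H] (hXA : Subgroup.closure XA = ⊤) {d : ℕ} {f : H → G}
    (hf : ∀ h, ∃ l : List G, l.length = d ∧ (∀ x ∈ l, ∃ y ∈ XB, ∃ k : ℤ, x = y ^ k) ∧
      l.prod = f h) :
    ProdOfPalBetween (wreathGens XB XA) inr (Fintype.card H * d) (base f) := by
  rw [← list_prod_single, ← Finset.card_univ, ← Finset.length_toList,
    ← List.length_map (f := fun h => single h (f h))]
  refine ProdOfPalBetween.list_prod fun x hx => ?_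
  obtain ⟨h, -, rfl⟩ := List.mem_map.1 hx
  obtain ⟨l, rfl, hl, hlf⟩ := hf h
  rw [← hlf, map_list_prod, ← mul_one l.length, ← List.length_map (f := single h)]
  refine ProdOfPalBetween.list_prod fun _ hx => ?_
  obtain ⟨x, hxl, rfl⟩ := List.mem_map.1 hx
  obtain ⟨y, hy, k, rfl⟩ := hl x hxl
  exact prodOfPalBetween_single_zpow hXA hy h k

end Abelian

end Wreath

open SemidirectProduct

/-- Let `H` be a finite non-abelian group generated by `X`, with
`M = max { l_X(h) : h ∈ H }`, and `G` a group generated by a finite set `Y` with `|Y| = d`.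
Then there is `c ∈ H` (possibly `c = 1`) such that every element of `G ≀ H` is a product
of at most `M·(d·|H| + 1) + 1` palindromes with respect to the canonical copies of
`X ∪ {c}` and of `Y`. -/
theorem wreath_finite_palindromic_width {G H : Type*} [Group G] [Group H] [Fintype H]
    (X : Finset H) (hX : Subgroup.closure (X : Set H) = ⊤)
    (hna : ∃ a b : H, a * b ≠ b * a)
    (Y : Finset G) (d : ℕ) (hY : Subgroup.closure (Y : Set G) = ⊤) (hd : Y.card = d)
    (M : ℕ) (hM : M = Finset.univ.sup fun h : H => wordLength (X : Set H) h) :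
    ∃ c : H, ∀ g : Wreath G H,
      ProdOfPal (wreathGens (Y : Set G) ((X : Set H) ∪ {c}))
        (M * (d * Fintype.card H + 1) + 1) g := by
  classical
  obtain ⟨c, k, hk, hkc⟩ := IsRevPair.exists_union_singleton_ne_one hX hna
  have hXc : Subgroup.closure ((X : Set H) ∪ {c}) = ⊤ :=
    eq_top_mono (Subgroup.closure_mono Set.subset_union_left) hX
  have hlen_le (h : H) : wordLength (X : Set H) h ≤ M := hM ▸ Finset.le_sup (Finset.mem_univ h)
  have hM1 : 1 ≤ M := by
    obtain ⟨a, b, hab⟩ := hna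
    have ha : a ≠ 1 := by
      rintro rfl
      simp at hab
    exact (wordLength_pos hX ha).trans_le (hlen_le a)
  refine ⟨c, fun w => ?_⟩
  choose l hlen hl z hz hlz using
    fun h => exists_list_zpow_mul_mem_commutator hY ((w.left : H → G) h)
  obtain ⟨γ, habel⟩ := Wreath.prodOfPalBetween_base hXc
    (fun h => ⟨l h, (hlen h).trans hd, hl h, rfl⟩) 1
  rw [map_one, one_mul] at habel
  have hcomm := isPalindrome_of_mem_revKernel
    (Wreath.base_mem_revKernel hY hXc hk hkc (f := fun x => z (γ * x)) fun x => hz _)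
  have hright := ((ProdOfPal.of_wordLength hX (γ⁻¹ * w.right)).map inr
    ((Set.image_mono Set.subset_union_left).trans
      (Wreath.inr_image_subset_wreathGens (Y : Set G) ((X : Set H) ∪ {c})))).mono (hlen_le _)
  rw [Wreath.eq_base_mul_inr_mul_base_mul_inr w hlz γ]
  refine ((habel.mul hcomm.prodOfPal).mul hright).mono ?_
  nlinarith [Nat.mul_le_mul_right (d * Fintype.card H) hM1]
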